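/- arXiv:1307.5401 — 10 statements merged into one kernel-verified Lean document; each statement's English description precedes it below -/
import Mathlib

section
/- Let R be a commutative ring with unity. If there exists a proper ideal I of R with I not contained in J(R) such that I + J = R for every proper ideal J of R with J not contained in J(R) and J ≠ I (i.e., Γ(R) has a vertex adjacent to all other vertices), then R is isomorphic as a ring to the direct product S × K of a commutative local ring S and a field K. -/
/-!
A vertex `I` adjacent to every other vertex is maximal, and it is the only vertex lying
below it, so `I = (x²)` for any `x ∈ I \ J(R)`. Writing `x = r x²`, the element `e = r x`
is an idempotent with `I = (e)`, whence `R ≃ R ⧸ (1 - e) × R ⧸ (e)` and `R ⧸ (e)` is a field.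
The maximal ideals of `R ⧸ (1 - e)` are the maximal ideals of `R` other than `I`, and there
is exactly one of them: if `P ≠ I` is maximal, `I ⊓ P` is a vertex below `I` different from
`I`, so `I ⊓ P ⊆ J(R)`, which forces every maximal ideal other than `I` to contain `P`.
-/

namespace Ideal

variable {R : Type*} [CommRing R]

theorem _root_.IsIdempotentElem.one_sub_mem_iff_notMem {e : R} (he : IsIdempotentElem e)
    {P : Ideal R} (hP : P.IsPrime) : 1 - e ∈ P ↔ e ∉ P := by
  refine ⟨fun h he' => hP.ne_top ((eq_top_iff_one P).2 (by simpa using P.add_mem h he')),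
    fun h => (hP.mem_or_mem ?_).resolve_left h⟩
  rw [he.mul_one_sub_self]
  exact P.zero_mem

theorem Quotient.isLocalRing_of_existsUnique {N : Ideal R}
    (h : ∃! M : Ideal R, M.IsMaximal ∧ N ≤ M) : IsLocalRing (R ⧸ N) := by
  obtain ⟨M, ⟨hM, hNM⟩, huniq⟩ := h
  have hcomap : ∀ m : Ideal (R ⧸ N), m.IsMaximal → m.comap (Quotient.mk N) = M := fun m _ =>
    huniq _ ⟨comap_isMaximal_of_surjective _ Quotient.mk_surjective,
      (mk_ker (I := N)).ge.trans (ker_le_comap _)⟩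
  have : Nontrivial (R ⧸ N) := Quotient.nontrivial_iff.2 (ne_top_of_le_ne_top hM.ne_top hNM)
  obtain ⟨m, hm⟩ := exists_maximal (R ⧸ N)
  exact IsLocalRing.of_unique_max_ideal ⟨m, hm, fun m' hm' =>
    comap_injective_of_surjective _ Quotient.mk_surjective
      ((hcomap m' hm').trans (hcomap m hm).symm)⟩

structure IsUniversalComaximalVertex (I : Ideal R) : Prop where
  ne_top : I ≠ ⊤
  not_le_jacobson : ¬ I ≤ jacobson ⊥
  sup_eq_top : ∀ J : Ideal R, J ≠ ⊤ → ¬ J ≤ jacobson ⊥ → J ≠ I → I ⊔ J = ⊤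

namespace IsUniversalComaximalVertex

variable {I : Ideal R} (hI : I.IsUniversalComaximalVertex)
include hI

theorem eq_of_le {J : Ideal R} (hJI : J ≤ I) (hJ : ¬ J ≤ jacobson ⊥) : J = I := by
  by_contra hne
  have := hI.sup_eq_top J (ne_top_of_le_ne_top hI.ne_top hJI) hJ hne
  exact hI.ne_top (sup_eq_left.2 hJI ▸ this)

theorem isMaximal : I.IsMaximal := by
  obtain ⟨M, hM, hIM⟩ := exists_le_maximal I hI.ne_top
  by_contra hI'
  have hMI : M ≠ I := fun h => hI' (h ▸ hM)
  have := hI.sup_eq_top M hM.ne_top (fun h => hI.not_le_jacobson (hIM.trans h)) hMI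
  exact hM.ne_top (sup_eq_right.2 hIM ▸ this)

theorem eq_of_isMaximal {P Q : Ideal R} (hP : P.IsMaximal) (hQ : Q.IsMaximal)
    (hPI : P ≠ I) (hQI : Q ≠ I) : P = Q := by
  have hIP : I ⊓ P ≤ jacobson ⊥ := by
    by_contra h
    exact hPI (hI.isMaximal.eq_of_le hP.ne_top (inf_eq_left.1 (hI.eq_of_le inf_le_left h))).symm
  rcases hQ.isPrime.inf_le.1 (hIP.trans (sInf_le ⟨bot_le, hQ⟩)) with hIQ | hPQ
  · exact absurd (hI.isMaximal.eq_of_le hQ.ne_top hIQ).symm hQI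
  · exact hP.eq_of_le hQ.ne_top hPQ

theorem exists_isIdempotentElem_eq_span : ∃ e : R, IsIdempotentElem e ∧ I = span {e} := by
  obtain ⟨x, hxI, hx⟩ := SetLike.not_le_iff_exists.1 hI.not_le_jacobson
  have hsq : span {x * x} = I := by
    refine hI.eq_of_le ((span_singleton_le_iff_mem _).2 (I.mul_mem_left x hxI)) fun h => hx ?_
    exact isRadical_jacobson ⊥ ⟨2, by simpa [sq] using h (mem_span_singleton_self _)⟩
  obtain ⟨r, hr⟩ := mem_span_singleton'.1 (hsq ▸ hxI : x ∈ span {x * x})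
  have hxe : x * (r * x) = x := by linear_combination hr
  refine ⟨r * x, ?_, le_antisymm ?_ ((span_singleton_le_iff_mem _).2 (I.mul_mem_left r hxI))⟩
  · exact (by linear_combination r * hxe : r * x * (r * x) = r * x)
  · rw [← hsq, span_singleton_le_iff_mem]
    exact mul_mem_left _ x (mem_span_singleton'.2 ⟨x, hxe⟩)

theorem isLocalRing_quotient_span_one_sub {e : R} (he : IsIdempotentElem e)
    (hIe : I = span {e}) : IsLocalRing (R ⧸ span {1 - e}) := by
  have hle_iff : ∀ P : Ideal R, P.IsMaximal → (span {1 - e} ≤ P ↔ P ≠ I) := by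
    intro P hP
    rw [span_singleton_le_iff_mem, he.one_sub_mem_iff_notMem hP.isPrime,
      ← span_singleton_le_iff_mem, ← hIe]
    exact ⟨fun h hPI => h hPI.ge, fun h hIP => h (hI.isMaximal.eq_of_le hP.ne_top hIP).symm⟩
  obtain ⟨M, hM, hIM⟩ : ∃ M : Ideal R, M.IsMaximal ∧ ¬ I ≤ M := by
    by_contra! h
    exact hI.not_le_jacobson (le_sInf fun P hP => h P hP.2)
  have hMI : M ≠ I := fun h => hIM h.ge
  exact Quotient.isLocalRing_of_existsUnique ⟨M, ⟨hM, (hle_iff M hM).2 hMI⟩,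
    fun P hP => hI.eq_of_isMaximal hP.1 hM ((hle_iff P hP.1).1 hP.2) hMI⟩

end IsUniversalComaximalVertex

end Ideal

/-- If the co-maximal ideal graph `Γ(R)` has a vertex adjacent to all other vertices
(a proper ideal `I ⊄ J(R)` with `I + J = R` for every other proper ideal `J ⊄ J(R)`),
then `R` is isomorphic to the direct product of a local ring and a field. -/
theorem comaximal_graph_vertex_adjacent_all_iff_local_times_field
    (R : Type) [CommRing R]
    (h : ∃ I : Ideal R, I ≠ ⊤ ∧ ¬ I ≤ Ideal.jacobson (⊥ : Ideal R) ∧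
      ∀ J : Ideal R, J ≠ ⊤ → ¬ J ≤ Ideal.jacobson (⊥ : Ideal R) → J ≠ I → I ⊔ J = ⊤) :
    ∃ (S : Type) (_ : CommRing S) (_ : IsLocalRing S) (K : Type) (_ : Field K),
      Nonempty (R ≃+* S × K) := by
  obtain ⟨I, hItop, hIJac, hadj⟩ := h
  have hI : I.IsUniversalComaximalVertex := ⟨hItop, hIJac, hadj⟩
  obtain ⟨e, he, hIe⟩ := hI.exists_isIdempotentElem_eq_span
  have hlocal := hI.isLocalRing_quotient_span_one_sub he hIe
  have := hI.isMaximal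
  subst hIe
  exact ⟨_, _, hlocal, _, Ideal.Quotient.field _,
    ⟨(AlgEquiv.prodQuotientOfIsIdempotentElem R he.one_sub he (sub_add_cancel 1 e)
      he.one_sub_mul_self).toRingEquiv⟩⟩
end

section
/- Let S be a commutative local ring, K a field, and R = S × K. Then the ideal S × 0 of R is a proper ideal not contained in J(R), and for every proper ideal L of R with L not contained in J(R) and L ≠ S × 0, one has (S × 0) + L = R; that is, S × 0 is a vertex of Γ(R) adjacent to all other vertices. -/
/-!
Ideals of `S × K` are products `A × B`, and `B` is `0` or `K`. Since
`J(S × K) = 𝔪 × 0` for the maximal ideal `𝔪` of `S`, the ideal `S × 0` escapes `J(S × K)`,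
and a vertex `L = A × B` different from `S × 0` cannot have `B = 0`: then `A ≠ S`, so
`A ≤ 𝔪` and `L ≤ J(S × K)`. Hence `B = K` and `(S × 0) + L = S × K`.
-/

namespace Ideal

section Semiring

variable {R S : Type*} [Semiring R] [Semiring S]

theorem prod_le_prod_iff {I I' : Ideal R} {J J' : Ideal S} :
    prod I J ≤ prod I' J' ↔ I ≤ I' ∧ J ≤ J' := by
  refine ⟨fun h ↦ ⟨?_, ?_⟩, fun h ↦ prod_mono h.1 h.2⟩
  · simpa using map_mono (f := RingHom.fst R S) h
  · simpa using map_mono (f := RingHom.snd R S) h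

theorem prod_sup_prod (I I' : Ideal R) (J J' : Ideal S) :
    prod I J ⊔ prod I' J' = prod (I ⊔ I') (J ⊔ J') := by
  conv_lhs => rw [ideal_prod_eq (prod I J ⊔ prod I' J')]
  simp only [map_sup, map_fst_prod, map_snd_prod]

end Semiring

theorem jacobson_bot_prod {R S : Type*} [CommRing R] [CommRing S] :
    jacobson (⊥ : Ideal (R × S)) = prod (jacobson ⊥) (jacobson ⊥) := by
  ext x
  simp only [mem_jacobson_bot, mem_prod, Prod.forall, Prod.isUnit_iff, Prod.fst_add,
    Prod.snd_add, Prod.fst_mul, Prod.snd_mul, Prod.fst_one, Prod.snd_one]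
  exact ⟨fun h ↦ ⟨fun a ↦ (h a 0).1, fun b ↦ (h 0 b).2⟩, fun h a b ↦ ⟨h.1 a, h.2 b⟩⟩

theorem jacobson_bot_prod_field (S K : Type*) [CommRing S] [IsLocalRing S] [Field K] :
    jacobson (⊥ : Ideal (S × K)) = prod (IsLocalRing.maximalIdeal S) ⊥ := by
  rw [jacobson_bot_prod, IsLocalRing.jacobson_eq_maximalIdeal ⊥ bot_ne_top,
    IsLocalRing.jacobson_eq_maximalIdeal ⊥ bot_ne_top, IsLocalRing.maximalIdeal_eq_bot]

end Ideal

/-- If `S` is a local commutative ring, `K` is a field and `R = S × K`, then the ideal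
`S × 0` is a proper ideal of `R` not contained in `J(R)`, and it is comaximal with every
other proper ideal `L ⊄ J(R)`; i.e. `S × 0` is a vertex of `Γ(R)` adjacent to all
other vertices. -/
theorem prod_top_bot_adjacent_all (S : Type) [CommRing S] [IsLocalRing S]
    (K : Type) [Field K] :
    (Ideal.prod (⊤ : Ideal S) (⊥ : Ideal K)) ≠ ⊤ ∧
    ¬ (Ideal.prod (⊤ : Ideal S) (⊥ : Ideal K)) ≤ Ideal.jacobson (⊥ : Ideal (S × K)) ∧
    ∀ L : Ideal (S × K), L ≠ ⊤ → ¬ L ≤ Ideal.jacobson (⊥ : Ideal (S × K)) →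
      L ≠ Ideal.prod (⊤ : Ideal S) (⊥ : Ideal K) →
      (Ideal.prod (⊤ : Ideal S) (⊥ : Ideal K)) ⊔ L = ⊤ := by
  have h𝔪 := (IsLocalRing.maximalIdeal.isMaximal S).ne_top
  rw [Ideal.jacobson_bot_prod_field]
  refine ⟨by simp, by simpa [Ideal.prod_le_prod_iff, top_le_iff] using h𝔪, fun L _ hLJ hLne ↦ ?_⟩
  rw [Ideal.ideal_prod_eq L] at hLJ hLne ⊢
  rcases Ideal.eq_bot_or_top (L.map (RingHom.snd S K)) with hB_bot | hB_top
  · rw [hB_bot] at hLJ hLne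
    have hA : L.map (RingHom.fst S K) ≤ IsLocalRing.maximalIdeal S :=
      IsLocalRing.le_maximalIdeal fun hA ↦ hLne (by rw [hA])
    exact (hLJ (Ideal.prod_mono_left hA)).elim
  · rw [hB_top, Ideal.prod_sup_prod, top_sup_eq, sup_top_eq, Ideal.prod_top_top]
end

section
/- Let R be a commutative ring with unity such that Γ(R) is an infinite star graph, i.e., the set of vertices of Γ(R) is infinite, there is a vertex c adjacent to every other vertex, and no two vertices distinct from c are adjacent. Then R is isomorphic as a ring to the direct product of a field and a commutative local ring. -/
/-! Since `c ⊄ J(R)`, some maximal ideal `m` misses `c`. The star condition forces every maximal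
ideal to be `c` or `m`, so `c` is maximal, and the centre condition makes `c` the only proper
ideal not inside `m`. For `x ∈ c \ m` this gives `c = (x) = c²`, so `c` is generated by an
idempotent `e`, and `R ≅ R/(e) × R/(1 - e)`, where `R/(e)` is a field and `R/(1 - e)` is local
because `m` is the only maximal ideal containing `1 - e`. -/

open Ideal

universe u

section

variable {R : Type u} [CommRing R]

theorem Ideal.exists_isMaximal_not_le_of_not_le_jacobson_bot {c : Ideal R}
    (hc : ¬ c ≤ jacobson ⊥) : ∃ m : Ideal R, m.IsMaximal ∧ ¬ c ≤ m := by
  by_contra! h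
  exact hc (le_sInf fun m hm => h m hm.2)

theorem Ideal.isLocalRing_quotient_of_forall_isMaximal_eq {I m : Ideal R} [m.IsMaximal]
    (hIm : I ≤ m) (h : ∀ n : Ideal R, n.IsMaximal → I ≤ n → n = m) :
    IsLocalRing (R ⧸ I) := by
  have : Nontrivial (R ⧸ I) :=
    Quotient.nontrivial_iff.mpr (ne_top_of_le_ne_top (IsMaximal.ne_top ‹_›) hIm)
  have hcomap : ∀ P : Ideal (R ⧸ I), P.IsMaximal → P.comap (Quotient.mk I) = m := fun P _ =>
    h _ (comap_isMaximal_of_surjective _ Quotient.mk_surjective)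
      (by simpa only [mk_ker] using ker_le_comap (Quotient.mk I))
  obtain ⟨P, hP⟩ := exists_maximal (R ⧸ I)
  refine IsLocalRing.of_unique_max_ideal ⟨P, hP, fun Q hQ => ?_⟩
  exact comap_injective_of_surjective _ Quotient.mk_surjective
    ((hcomap Q hQ).trans (hcomap P hP).symm)

theorem Ideal.exists_isIdempotentElem_eq_span_of_forall_not_le_eq {c m : Ideal R}
    [hm : m.IsPrime] (hcm : ¬ c ≤ m) (hc : c ≠ ⊤)
    (h : ∀ I : Ideal R, I ≠ ⊤ → ¬ I ≤ m → I = c) :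
    ∃ e : R, IsIdempotentElem e ∧ c = span {e} := by
  obtain ⟨x, hxc, hxm⟩ := Set.not_subset.mp hcm
  have hspan : span {x} = c :=
    h _ (ne_top_of_le_ne_top hc ((span_singleton_le_iff_mem c).mpr hxc))
      fun hle => hxm (hle (mem_span_singleton_self x))
  have hidem : IsIdempotentElem c :=
    h _ (ne_top_of_le_ne_top hc mul_le_left) fun hle => hcm ((hm.mul_le.mp hle).elim id id)
  exact (isIdempotentElem_iff_of_fg c ⟨{x}, by simpa using hspan⟩).mp hidem

theorem exists_ringEquiv_field_prod_isLocalRing {e : R}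
    (he : IsIdempotentElem e) [(span {e}).IsMaximal] {m : Ideal R} [hm : m.IsMaximal]
    (hne : m ≠ span {e}) (hmax : ∀ n : Ideal R, n.IsMaximal → n = span {e} ∨ n = m) :
    ∃ (K : Type u) (_ : Field K) (S : Type u) (_ : CommRing S) (_ : IsLocalRing S),
      Nonempty (R ≃+* K × S) := by
  have hem : e ∉ m := fun h =>
    hne (IsMaximal.eq_of_le ‹_› hm.ne_top ((span_singleton_le_iff_mem m).mpr h)).symm
  have h1e : 1 - e ∈ m :=
    (hm.isPrime.mem_or_mem (he.mul_one_sub_self ▸ m.zero_mem)).resolve_left hem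
  have hloc : IsLocalRing (R ⧸ span {1 - e}) := by
    refine isLocalRing_quotient_of_forall_isMaximal_eq ((span_singleton_le_iff_mem m).mpr h1e)
      fun n hn hle => (hmax n hn).resolve_left fun hn' => hn.ne_top ?_
    rw [hn', span_singleton_le_iff_mem] at hle
    rw [hn', eq_top_iff_one, ← add_sub_cancel e 1]
    exact add_mem (mem_span_singleton_self e) hle
  exact ⟨R ⧸ span {e}, Quotient.field _, R ⧸ span {1 - e}, inferInstance, hloc,
    ⟨(AlgEquiv.prodQuotientOfIsIdempotentElem ℤ he he.one_sub (add_sub_cancel e 1)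
      he.mul_one_sub_self).toRingEquiv⟩⟩

theorem isMaximal_eq_or_eq_of_star {c m : Ideal R}
    (hstar : ∀ I J : Ideal R, I ≠ ⊤ → ¬ I ≤ jacobson ⊥ → J ≠ ⊤ → ¬ J ≤ jacobson ⊥ →
      I ≠ c → J ≠ c → I ≠ J → I ⊔ J ≠ ⊤)
    (hc : c ≠ ⊤) [hm : m.IsMaximal] (hcm : ¬ c ≤ m) (n : Ideal R) (hn : n.IsMaximal) :
    n = c ∨ n = m := by
  have hmJ : ¬ m ≤ jacobson ⊥ := fun hle => by
    obtain ⟨M, hM, hcM⟩ := exists_le_maximal c hc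
    exact hcm (hm.eq_of_le hM.ne_top (hle.trans (sInf_le ⟨bot_le, hM⟩)) ▸ hcM)
  by_contra! ⟨hnc, hnm⟩
  by_cases hnJ : n ≤ jacobson ⊥
  · exact hnm (hn.eq_of_le hm.ne_top (hnJ.trans (sInf_le ⟨bot_le, hm⟩)))
  · exact hstar n m hn.ne_top hnJ hm.ne_top hmJ hnc (fun h => hcm (h ▸ le_rfl)) hnm
      (hn.coprime_of_ne hm hnm)

theorem eq_of_not_le_of_comaximal_center {c m : Ideal R}
    (hcenter : ∀ J : Ideal R, J ≠ ⊤ → ¬ J ≤ jacobson ⊥ → J ≠ c → c ⊔ J = ⊤)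
    (hc : c ≠ ⊤) [hm : m.IsMaximal] (hmax : ∀ n : Ideal R, n.IsMaximal → n = c ∨ n = m)
    (I : Ideal R) (hI : I ≠ ⊤) (hIm : ¬ I ≤ m) : I = c := by
  obtain ⟨n, hn, hIn⟩ := exists_le_maximal I hI
  have hIc : I ≤ c := (hmax n hn).elim (· ▸ hIn) fun h => absurd (h ▸ hIn) hIm
  by_contra hne
  exact hc (sup_eq_left.mpr hIc ▸
    hcenter I hI (fun hle => hIm (hle.trans (sInf_le ⟨bot_le, hm⟩))) hne)

end

theorem comaximal_graph_infinite_star_general (R : Type) [CommRing R]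
    (c : Ideal R) (hc : c ≠ ⊤ ∧ ¬ c ≤ Ideal.jacobson (⊥ : Ideal R))
    (hcenter : ∀ J : Ideal R, J ≠ ⊤ → ¬ J ≤ Ideal.jacobson (⊥ : Ideal R) → J ≠ c →
      c ⊔ J = ⊤)
    (hstar : ∀ I J : Ideal R, I ≠ ⊤ → ¬ I ≤ Ideal.jacobson (⊥ : Ideal R) →
      J ≠ ⊤ → ¬ J ≤ Ideal.jacobson (⊥ : Ideal R) → I ≠ c → J ≠ c → I ≠ J →
      I ⊔ J ≠ ⊤) :
    ∃ (K : Type) (_ : Field K) (S : Type) (_ : CommRing S) (_ : IsLocalRing S),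
      Nonempty (R ≃+* K × S) := by
  obtain ⟨m, hm, hcm⟩ := exists_isMaximal_not_le_of_not_le_jacobson_bot hc.2
  have hmax := isMaximal_eq_or_eq_of_star hstar hc.1 hcm
  have hcmax : c.IsMaximal := by
    obtain ⟨M, hM, hcM⟩ := exists_le_maximal c hc.1
    obtain rfl | rfl := hmax M hM
    exacts [hM, absurd hcM hcm]
  obtain ⟨e, he, rfl⟩ := exists_isIdempotentElem_eq_span_of_forall_not_le_eq hcm hc.1
    (eq_of_not_le_of_comaximal_center hcenter hc.1 hmax)
  exact exists_ringEquiv_field_prod_isLocalRing he (fun h => hcm (h ▸ le_rfl)) hmax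

/-- If the co-maximal ideal graph `Γ(R)` is an infinite star graph (the vertex set is
infinite, some vertex `c` is adjacent to every other vertex, and no two vertices other
than `c` are adjacent), then `R` is isomorphic to the direct product of a field and a
local ring. -/
theorem comaximal_graph_infinite_star (R : Type) [CommRing R]
    (hinf : {I : Ideal R | I ≠ ⊤ ∧ ¬ I ≤ Ideal.jacobson (⊥ : Ideal R)}.Infinite)
    (c : Ideal R) (hc : c ≠ ⊤ ∧ ¬ c ≤ Ideal.jacobson (⊥ : Ideal R))
    (hcenter : ∀ J : Ideal R, J ≠ ⊤ → ¬ J ≤ Ideal.jacobson (⊥ : Ideal R) → J ≠ c →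
      c ⊔ J = ⊤)
    (hstar : ∀ I J : Ideal R, I ≠ ⊤ → ¬ I ≤ Ideal.jacobson (⊥ : Ideal R) →
      J ≠ ⊤ → ¬ J ≤ Ideal.jacobson (⊥ : Ideal R) → I ≠ c → J ≠ c → I ≠ J →
      I ⊔ J ≠ ⊤) :
    ∃ (K : Type) (_ : Field K) (S : Type) (_ : CommRing S) (_ : IsLocalRing S),
      Nonempty (R ≃+* K × S) :=
  comaximal_graph_infinite_star_general R c hc hcenter hstar
end

section
/- Let R be a commutative ring with unity and let I be a proper ideal of R not contained in J(R) such that I + J = R for every proper ideal J of R with J not contained in J(R) and J ≠ I. Then I is a maximal ideal of R, and for every element a ∈ I with a ∉ J(R), one has I = Ra (the principal ideal generated by a). -/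
/-! The argument is order-theoretic: the join of two comparable elements is the larger one,
so a proper vertex comaximal with every other vertex cannot lie strictly below or strictly
above another proper vertex. Above `I` this gives maximality; below `I` it forces
`Ra = I`, as `Ra ⊆ I` is a vertex when `a ∉ J(R)`. -/

section Lattice

variable {α : Type*} [SemilatticeSup α] [OrderTop α] {i j x : α}

theorem eq_of_le_of_forall_sup_eq_top (hi : i ≠ ⊤)
    (hadj : ∀ y, y ≠ ⊤ → ¬ y ≤ j → y ≠ i → i ⊔ y = ⊤) (hxi : x ≤ i) (hxj : ¬ x ≤ j) :
    x = i := by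
  by_contra hne
  have hx : x ≠ ⊤ := ne_top_of_le_ne_top hi hxi
  exact hi (sup_eq_left.mpr hxi ▸ hadj x hx hxj hne)

theorem isCoatom_of_forall_sup_eq_top (hi : i ≠ ⊤) (hij : ¬ i ≤ j)
    (hadj : ∀ y, y ≠ ⊤ → ¬ y ≤ j → y ≠ i → i ⊔ y = ⊤) : IsCoatom i := by
  refine ⟨hi, fun x hix => ?_⟩
  by_contra hx
  have hxj : ¬ x ≤ j := fun h => hij (hix.le.trans h)
  exact hx (sup_eq_right.mpr hix.le ▸ hadj x hx hxj hix.ne')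

end Lattice

/-- If `I` is a vertex of `Γ(R)` adjacent to all other vertices, then `I` is a maximal
ideal of `R`, and `I = Ra` for every `a ∈ I` with `a ∉ J(R)`. -/
theorem comaximal_graph_vertex_adjacent_all_isMaximal_and_principal
    (R : Type) [CommRing R] (I : Ideal R)
    (hI : I ≠ ⊤) (hIJ : ¬ I ≤ Ideal.jacobson (⊥ : Ideal R))
    (hadj : ∀ J : Ideal R, J ≠ ⊤ → ¬ J ≤ Ideal.jacobson (⊥ : Ideal R) → J ≠ I →
      I ⊔ J = ⊤) :
    I.IsMaximal ∧ ∀ a ∈ I, a ∉ Ideal.jacobson (⊥ : Ideal R) → I = Ideal.span {a} := by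
  refine ⟨⟨isCoatom_of_forall_sup_eq_top hI hIJ hadj⟩, fun a ha haJ => ?_⟩
  have hspan_le : Ideal.span {a} ≤ I := (Ideal.span_singleton_le_iff_mem I).mpr ha
  have hspan_not_le : ¬ Ideal.span {a} ≤ Ideal.jacobson ⊥ :=
    mt (Ideal.span_singleton_le_iff_mem _).mp haJ
  exact (eq_of_le_of_forall_sup_eq_top hI hadj hspan_le hspan_not_le).symm
end

section
/- Let R be a commutative ring with unity and suppose there exists a proper ideal I of R not contained in J(R) such that I + J = R for every proper ideal J of R with J not contained in J(R) and J ≠ I. Then R contains a nontrivial idempotent, i.e., an element e with e² = e, e ≠ 0, and e ≠ 1. -/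
/-!
Let `I` be a vertex of `Γ(R)` adjacent to every other vertex and pick `x ∈ I` outside `J(R)`.
Since `J(R)` is a radical ideal, `x ^ 2 ∉ J(R)`, so `(x ^ 2) ⊆ I` is again a vertex; it cannot be
adjacent to `I` (their sum is `I ≠ R`), hence `(x ^ 2) = I ∋ x`. Writing `x = r x ^ 2`, the element
`e = r x` is idempotent, nonzero because `x = e x`, and not `1` because `e ∈ I`.
-/

theorem IsIdempotentElem.mul_of_mul_sq_eq {M : Type*} [CommMonoid M] {r x : M}
    (h : r * x ^ 2 = x) : IsIdempotentElem (r * x) := by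
  calc r * x * (r * x) = r * (r * x ^ 2) := by rw [sq]; ac_rfl
    _ = r * x := by rw [h]

namespace Ideal

variable {R : Type*} [CommRing R]

theorem sq_mem_jacobson_bot_iff {x : R} : x ^ 2 ∈ jacobson (⊥ : Ideal R) ↔ x ∈ jacobson ⊥ :=
  ⟨fun h => isRadical_jacobson ⊥ ⟨2, h⟩, fun h => pow_mem_of_mem _ h 2 two_pos⟩

theorem span_singleton_sq_eq_of_forall_sup_eq_top {I : Ideal R} (hI : I ≠ ⊤)
    (hadj : ∀ J : Ideal R, J ≠ ⊤ → ¬ J ≤ jacobson ⊥ → J ≠ I → I ⊔ J = ⊤)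
    {x : R} (hxI : x ∈ I) (hx : x ∉ jacobson ⊥) : span {x ^ 2} = I := by
  have hle : span {x ^ 2} ≤ I := (span_singleton_le_iff_mem I).mpr (pow_mem_of_mem I hxI 2 two_pos)
  by_contra hne
  have hsq : ¬ span {x ^ 2} ≤ jacobson ⊥ := fun h =>
    hx (sq_mem_jacobson_bot_iff.mp (h (mem_span_singleton_self _)))
  have hsup := hadj _ (ne_top_of_le_ne_top hI hle) hsq hne
  exact hI (by rwa [sup_of_le_left hle] at hsup)

end Ideal

/-- If the co-maximal ideal graph `Γ(R)` has a vertex adjacent to all other vertices,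
then `R` contains a nontrivial idempotent. -/
theorem comaximal_graph_vertex_adjacent_all_exists_idempotent
    (R : Type) [CommRing R]
    (h : ∃ I : Ideal R, I ≠ ⊤ ∧ ¬ I ≤ Ideal.jacobson (⊥ : Ideal R) ∧
      ∀ J : Ideal R, J ≠ ⊤ → ¬ J ≤ Ideal.jacobson (⊥ : Ideal R) → J ≠ I → I ⊔ J = ⊤) :
    ∃ e : R, e ^ 2 = e ∧ e ≠ 0 ∧ e ≠ 1 := by
  obtain ⟨I, hItop, hIjac, hadj⟩ := h
  obtain ⟨x, hxI, hx⟩ := SetLike.not_le_iff_exists.mp hIjac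
  have hspan := Ideal.span_singleton_sq_eq_of_forall_sup_eq_top hItop hadj hxI hx
  obtain ⟨r, hr⟩ := Ideal.mem_span_singleton'.mp (hspan ▸ hxI)
  have hx_eq : r * x * x = x := by rw [mul_assoc, ← sq, hr]
  refine ⟨r * x, (IsIdempotentElem.mul_of_mul_sq_eq hr).pow_eq two_ne_zero, ?_, ?_⟩
  · intro h0
    rw [h0, zero_mul] at hx_eq
    exact hx (hx_eq ▸ zero_mem _)
  · intro h1
    exact hItop ((Ideal.eq_top_iff_one I).mpr (h1 ▸ I.mul_mem_left r hxI))
end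

section
/- Let R be a commutative ring with unity. Suppose there exists a natural number n such that every independent set of Γ(R) has at most n elements, i.e., every family of proper ideals of R, each not contained in J(R), that are pairwise non-comaximal (I₁ + I₂ ≠ R for all distinct members I₁, I₂) has cardinality at most n. Then Γ(R) is a finite graph, i.e., the set of proper ideals of R not contained in J(R) is finite. -/
/-!
The vertices lying below a fixed maximal ideal `M` are pairwise non-comaximal (their sum stays
inside `M`), so there are finitely many of them. If there were infinitely many maximal ideals, then
for a fixed maximal `M₀` the ideals `M ⊓ M₀`, `M ≠ M₀` maximal, would be infinitely many distinct
vertices below `M₀`: such an ideal escapes every third maximal ideal, hence is not inside `J(R)`.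
So `R` is semilocal, and since every vertex lies in some maximal ideal, `Γ(R)` is finite.
-/

theorem Set.finite_of_forall_finset_subset_card_le {α : Type*} {s : Set α} {n : ℕ}
    (h : ∀ t : Finset α, ↑t ⊆ s → t.card ≤ n) : s.Finite := by
  by_contra hs
  obtain ⟨t, hts, htn⟩ := Set.Infinite.exists_subset_card_eq hs (n + 1)
  have := h t hts
  omega

namespace Ideal

variable {R : Type*} [CommRing R]

theorem jacobson_bot_le_of_isMaximal {M : Ideal R} (hM : M.IsMaximal) : jacobson ⊥ ≤ M :=
  sInf_le ⟨bot_le, hM⟩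

theorem eq_or_eq_of_inf_le_of_isMaximal {M N P : Ideal R} (hM : M.IsMaximal) (hN : N.IsMaximal)
    (hP : P.IsMaximal) (h : M ⊓ N ≤ P) : M = P ∨ N = P :=
  (hP.isPrime.inf_le.mp h).imp (hM.eq_of_le hP.ne_top) (hN.eq_of_le hP.ne_top)

variable (R) in
def comaximalGraphVertices : Set (Ideal R) :=
  {I | I ≠ ⊤ ∧ ¬ I ≤ jacobson ⊥}

variable (R) in
def ComaximalIndependenceNumberLE (n : ℕ) : Prop :=
  ∀ s : Finset (Ideal R), (∀ I ∈ s, I ∈ comaximalGraphVertices R) →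
    (∀ I ∈ s, ∀ J ∈ s, I ≠ J → I ⊔ J ≠ ⊤) → s.card ≤ n

theorem ComaximalIndependenceNumberLE.finite_of_pairwise {n : ℕ}
    (hn : ComaximalIndependenceNumberLE R n) {S : Set (Ideal R)}
    (hSV : S ⊆ comaximalGraphVertices R) (hS : S.Pairwise fun I J => I ⊔ J ≠ ⊤) : S.Finite :=
  Set.finite_of_forall_finset_subset_card_le fun t ht =>
    hn t (fun _ hI => hSV (ht hI)) fun _ hI _ hJ hIJ => hS (ht hI) (ht hJ) hIJ

theorem ComaximalIndependenceNumberLE.finite_vertices_le {n : ℕ}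
    (hn : ComaximalIndependenceNumberLE R n) {M : Ideal R} (hM : M.IsMaximal) :
    {I ∈ comaximalGraphVertices R | I ≤ M}.Finite :=
  hn.finite_of_pairwise (fun _ hI => hI.1) fun _ hI _ hJ _ htop =>
    hM.ne_top (top_unique (htop ▸ sup_le hI.2 hJ.2))

theorem inf_mem_comaximalGraphVertices {M N P : Ideal R} (hM : M.IsMaximal) (hN : N.IsMaximal)
    (hP : P.IsMaximal) (hMP : M ≠ P) (hNP : N ≠ P) : M ⊓ N ∈ comaximalGraphVertices R :=
  ⟨fun htop => hM.ne_top (top_unique (htop ▸ inf_le_left)), fun hJ =>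
    (eq_or_eq_of_inf_le_of_isMaximal hM hN hP (hJ.trans (jacobson_bot_le_of_isMaximal hP))).elim
      hMP hNP⟩

theorem ComaximalIndependenceNumberLE.finite_setOf_isMaximal {n : ℕ}
    (hn : ComaximalIndependenceNumberLE R n) : {M : Ideal R | M.IsMaximal}.Finite := by
  refine Set.not_infinite.mp fun hinf => ?_
  obtain ⟨M₀, hM₀⟩ := Set.Infinite.nonempty hinf
  have hinf' : ({M : Ideal R | M.IsMaximal} \ {M₀}).Infinite :=
    hinf.sdiff (Set.finite_singleton M₀)
  refine hinf' (Set.Finite.of_finite_image ((hn.finite_vertices_le hM₀).subset ?_)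
    (f := (· ⊓ M₀)) ?_)
  · rintro _ ⟨M, ⟨hM, hMM₀⟩, rfl⟩
    obtain ⟨P, ⟨hP, hPM₀⟩, hPM⟩ := (hinf'.sdiff (Set.finite_singleton M)).nonempty
    exact ⟨inf_mem_comaximalGraphVertices hM hM₀ hP (Ne.symm hPM) (Ne.symm hPM₀), inf_le_right⟩
  · rintro M ⟨hM, -⟩ N ⟨hN, hNM₀⟩ hMN
    exact (eq_or_eq_of_inf_le_of_isMaximal hM hM₀ hN (hMN.le.trans inf_le_left)).resolve_right
      (Ne.symm hNM₀)

end Ideal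

/-- If the independence number of the co-maximal ideal graph `Γ(R)` is finite (every
family of vertices that are pairwise non-comaximal has at most `n` elements for some
fixed `n`), then `Γ(R)` is a finite graph: the set of proper ideals of `R` not
contained in `J(R)` is finite. -/
theorem comaximal_graph_finite_of_independence_number_finite
    (R : Type) [CommRing R]
    (h : ∃ n : ℕ, ∀ s : Finset (Ideal R),
      (∀ I ∈ s, I ≠ ⊤ ∧ ¬ I ≤ Ideal.jacobson (⊥ : Ideal R)) →
      (∀ I ∈ s, ∀ J ∈ s, I ≠ J → I ⊔ J ≠ ⊤) → s.card ≤ n) :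
    {I : Ideal R | I ≠ ⊤ ∧ ¬ I ≤ Ideal.jacobson (⊥ : Ideal R)}.Finite := by
  obtain ⟨n, hbound⟩ := h
  have hn : Ideal.ComaximalIndependenceNumberLE R n := hbound
  have cover : Ideal.comaximalGraphVertices R ⊆
      ⋃ M ∈ {M : Ideal R | M.IsMaximal}, {I ∈ Ideal.comaximalGraphVertices R | I ≤ M} := by
    intro I hI
    obtain ⟨M, hM, hIM⟩ := Ideal.exists_le_maximal I hI.1
    exact Set.mem_biUnion hM ⟨hI, hIM⟩
  exact (hn.finite_setOf_isMaximal.biUnion fun _ hM => hn.finite_vertices_le hM).subset cover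
end

section
/- Let R be a commutative ring with unity. If there exists a natural number n such that every set of pairwise non-adjacent vertices of Γ(R) (i.e., every family of proper ideals of R, each not contained in J(R), with I₁ + I₂ ≠ R for all distinct members I₁, I₂) has at most n elements, then R has only finitely many maximal ideals. -/
/-!
If `R` has infinitely many maximal ideals, fix one of them, `M`. For maximal `N ≠ M` the ideals
`M ⊓ N` are pairwise distinct, and any two of them sum into `M`, so they are pairwise
non-adjacent. None of them lies in `J(R)`: a third maximal ideal `P` contains `J(R)` but not
`M ⊓ N`, since `P` is prime. This gives independent sets of every finite size.
-/

namespace Ideal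

variable {R : Type*} [CommRing R]

theorem IsMaximal.inf_le_iff {M N P : Ideal R} (hM : M.IsMaximal) (hN : N.IsMaximal)
    (hP : P.IsMaximal) : M ⊓ N ≤ P ↔ P = M ∨ P = N := by
  rw [hP.isPrime.inf_le]
  exact or_congr ⟨fun h ↦ (hM.eq_of_le hP.ne_top h).symm, fun h ↦ h ▸ le_rfl⟩
    ⟨fun h ↦ (hN.eq_of_le hP.ne_top h).symm, fun h ↦ h ▸ le_rfl⟩

theorem IsMaximal.inf_not_le_jacobson_bot {M N P : Ideal R} (hM : M.IsMaximal)
    (hN : N.IsMaximal) (hP : P.IsMaximal) (hPM : P ≠ M) (hPN : P ≠ N) :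
    ¬ M ⊓ N ≤ jacobson ⊥ := fun h ↦
  ((hM.inf_le_iff hN hP).mp (h.trans (sInf_le ⟨bot_le, hP⟩))).elim hPM hPN

theorem IsMaximal.injOn_inf {M : Ideal R} (hM : M.IsMaximal) :
    Set.InjOn (M ⊓ ·) {N | N.IsMaximal ∧ N ≠ M} := by
  rintro N ⟨hN, -⟩ N' ⟨hN', hN'M⟩ heq
  have hle : M ⊓ N ≤ N' := (heq : M ⊓ N = M ⊓ N').le.trans inf_le_right
  exact ((hM.inf_le_iff hN hN').mp hle).resolve_left hN'M |>.symm

theorem exists_pairwise_sup_ne_top_of_infinite_maximal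
    (hinf : {I : Ideal R | I.IsMaximal}.Infinite) (k : ℕ) :
    ∃ s : Finset (Ideal R), s.card = k ∧
      (∀ I ∈ s, I ≠ ⊤ ∧ ¬ I ≤ jacobson ⊥) ∧ (∀ I ∈ s, ∀ J ∈ s, I ≠ J → I ⊔ J ≠ ⊤) := by
  classical
  obtain ⟨M, hM⟩ := hinf.nonempty
  obtain ⟨t, hts, htk⟩ := (hinf.sdiff (Set.finite_singleton M)).exists_subset_card_eq k
  have ht : ∀ N ∈ t, N.IsMaximal ∧ N ≠ M := fun N hN ↦ hts hN
  have hsub : ∀ I ∈ t.image (M ⊓ ·), I ≤ M := by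
    simp only [Finset.mem_image]
    rintro _ ⟨N, -, rfl⟩
    exact inf_le_left
  refine ⟨t.image (M ⊓ ·), ?_, fun I hI ↦ ⟨ne_top_of_le_ne_top hM.ne_top (hsub I hI), ?_⟩,
    fun I hI J hJ _ ↦ ne_top_of_le_ne_top hM.ne_top (sup_le (hsub I hI) (hsub J hJ))⟩
  · rw [Finset.card_image_of_injOn (hM.injOn_inf.mono ht), htk]
  · obtain ⟨N, hN, rfl⟩ := Finset.mem_image.mp hI
    obtain ⟨P, hP, hPMN⟩ := (hinf.sdiff (Set.toFinite {M, N})).nonempty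
    simp only [Set.mem_insert_iff, Set.mem_singleton_iff, not_or] at hPMN
    exact IsMaximal.inf_not_le_jacobson_bot hM (ht N hN).1 hP hPMN.1 hPMN.2

end Ideal

/-- If every set of pairwise non-adjacent vertices of the co-maximal ideal graph `Γ(R)`
has at most `n` elements for some fixed `n`, then `R` has only finitely many maximal
ideals. -/
theorem finitely_many_maximal_ideals_of_independence_number_finite
    (R : Type) [CommRing R]
    (h : ∃ n : ℕ, ∀ s : Finset (Ideal R),
      (∀ I ∈ s, I ≠ ⊤ ∧ ¬ I ≤ Ideal.jacobson (⊥ : Ideal R)) →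
      (∀ I ∈ s, ∀ J ∈ s, I ≠ J → I ⊔ J ≠ ⊤) → s.card ≤ n) :
    {I : Ideal R | I.IsMaximal}.Finite := by
  obtain ⟨n, hn⟩ := h
  by_contra hinf
  obtain ⟨s, hcard, hvert, hindep⟩ :=
    Ideal.exists_pairwise_sup_ne_top_of_infinite_maximal hinf (n + 1)
  have := hn s hvert hindep
  omega
end

section
/- Let R be a commutative ring with unity. If there exists a proper ideal I of R not contained in J(R) such that the set of proper ideals J of R with J not contained in J(R) and I + J = R is finite (i.e., some vertex of Γ(R) has finite degree), then R contains a nontrivial idempotent: an element e with e² = e, e ≠ 0, and e ≠ 1. -/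
/-!
If `I ⊄ J(R)`, pick `i ∈ I` and `y` with `x = i * y + 1` not a unit; then `I + xR = R`, and every
`x^(n+1) R` is again a vertex adjacent to `I`. Finiteness of the degree makes the descending chain
`x^(n+1) R` stabilise, so some `x^(n+1) R` equals its square. A finitely generated idempotent ideal
is generated by an idempotent `e`, and `e ≠ 0, 1` because the ideal is neither inside `J(R)` nor
all of `R`.
-/

namespace Ideal

variable {R : Type*} [CommRing R]

theorem not_le_jacobson_bot_of_sup_eq_top {I J : Ideal R} (hI : I ≠ ⊤) (h : I ⊔ J = ⊤) :
    ¬ J ≤ jacobson ⊥ := fun hJ => by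
  obtain ⟨M, hM, hIM⟩ := exists_le_maximal I hI
  have hJM : J ≤ M := hJ.trans (sInf_le ⟨bot_le, hM⟩)
  exact hM.ne_top (top_le_iff.mp (h ▸ sup_le hIM hJM))

theorem exists_not_isUnit_sup_span_singleton_eq_top {I : Ideal R} (h : ¬ I ≤ jacobson ⊥) :
    ∃ x : R, ¬ IsUnit x ∧ I ⊔ span {x} = ⊤ := by
  obtain ⟨i, hiI, hi⟩ := Set.not_subset.mp h
  obtain ⟨y, hy⟩ := not_forall.mp (mt mem_jacobson_bot.mpr hi)
  refine ⟨i * y + 1, hy, (eq_top_iff_one _).mpr ?_⟩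
  convert Submodule.add_mem_sup (I.neg_mem (I.mul_mem_right y hiI)) (mem_span_singleton_self _)
    using 1
  ring

theorem exists_isIdempotentElem_span_singleton_pow {x : R}
    (h : (Set.range fun n : ℕ => span {x ^ (n + 1)}).Finite) :
    ∃ n : ℕ, IsIdempotentElem (span {x ^ (n + 1)}) := by
  obtain ⟨n, -, hn⟩ := Set.Finite.exists_minimalFor' (fun n : ℕ => span {x ^ (n + 1)})
    Set.univ (Set.image_univ ▸ h) Set.univ_nonempty
  -- `n` is minimal on an antitone chain, so the chain is constant from `n` on.
  have hsq : span {x ^ (n + 1)} * span {x ^ (n + 1)} = span {x ^ (2 * n + 1 + 1)} := by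
    rw [← sq, span_singleton_pow, ← pow_mul]; ring_nf
  refine ⟨n, hsq.trans (le_antisymm ?_ (hn trivial ?_))⟩ <;>
    exact span_singleton_le_span_singleton.mpr (pow_dvd_pow x (by omega))

theorem exists_isIdempotentElem_ne_zero_ne_one_of_fg {I : Ideal R} (hfg : I.FG)
    (hI : IsIdempotentElem I) (h0 : I ≠ ⊥) (h1 : I ≠ ⊤) :
    ∃ e : R, IsIdempotentElem e ∧ e ≠ 0 ∧ e ≠ 1 := by
  obtain ⟨e, he, rfl⟩ := (isIdempotentElem_iff_of_fg I hfg).mp hI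
  exact ⟨e, he, fun h => h0 (by rw [h]; exact span_singleton_eq_bot.mpr rfl),
    fun h => h1 (by rw [h]; exact span_singleton_one)⟩

end Ideal

/-- If some vertex of the co-maximal ideal graph `Γ(R)` has finite degree, then `R`
contains a nontrivial idempotent. -/
theorem exists_idempotent_of_vertex_finite_degree
    (R : Type) [CommRing R]
    (h : ∃ I : Ideal R, I ≠ ⊤ ∧ ¬ I ≤ Ideal.jacobson (⊥ : Ideal R) ∧
      {J : Ideal R | J ≠ ⊤ ∧ ¬ J ≤ Ideal.jacobson (⊥ : Ideal R) ∧ I ⊔ J = ⊤}.Finite) :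
    ∃ e : R, e ^ 2 = e ∧ e ≠ 0 ∧ e ≠ 1 := by
  obtain ⟨I, hI, hIJ, hfin⟩ := h
  obtain ⟨x, hx, hxI⟩ := Ideal.exists_not_isUnit_sup_span_singleton_eq_top hIJ
  have hmem : ∀ n : ℕ, Ideal.span {x ^ (n + 1)} ∈
      {J : Ideal R | J ≠ ⊤ ∧ ¬ J ≤ Ideal.jacobson ⊥ ∧ I ⊔ J = ⊤} := fun n => by
    have hsup : I ⊔ Ideal.span {x ^ (n + 1)} = ⊤ :=
      Ideal.span_singleton_pow x (n + 1) ▸ Ideal.sup_pow_eq_top hxI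
    exact ⟨fun h => hx ((isUnit_pow_iff n.succ_ne_zero).mp (Ideal.span_singleton_eq_top.mp h)),
      Ideal.not_le_jacobson_bot_of_sup_eq_top hI hsup, hsup⟩
  obtain ⟨n, hn⟩ := Ideal.exists_isIdempotentElem_span_singleton_pow
    (hfin.subset (Set.range_subset_iff.mpr hmem))
  obtain ⟨e, he, he0, he1⟩ := Ideal.exists_isIdempotentElem_ne_zero_ne_one_of_fg
    (Submodule.fg_span_singleton _) hn (fun h0 => (hmem n).2.1 (h0.le.trans bot_le)) (hmem n).1
  exact ⟨e, (sq e).trans he, he0, he1⟩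
end

section
/- Let R be a commutative ring with unity such that Γ(R) has at least one vertex and every vertex of Γ(R) has finite degree (for every proper ideal I of R not contained in J(R), the set of proper ideals J with J not contained in J(R) and I + J = R is finite). Then R is isomorphic as a ring to a direct product R₁ × ⋯ × Rₙ × S, where each Rᵢ is a uniserial commutative ring (its ideals are totally ordered by inclusion) and S is a finite commutative ring. -/
/-- A commutative ring is uniserial if its ideals are totally ordered by inclusion. -/
def IsUniserialRing (A : Type) [CommRing A] : Prop :=
  ∀ I J : Ideal A, I ≤ J ∨ J ≤ I

/-!
Γ(R) is finite: there are finitely many maximal ideals (all but one are neighbours of a fixed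
one), each of them is a vertex, and every vertex is a neighbour of some maximal ideal. For `g` in
one maximal ideal but not in another, the principal ideals `(g ^ k)` are vertices, so this chain
stabilises and `(g ^ n)` is an idempotent ideal, generated by an idempotent `e`. Every ideal `I`
is recovered as `(I + (e)) ∩ (I + (1 - e))`, an intersection of vertices or `R`, so `R` has only
finitely many ideals.

A ring with finitely many ideals is Artinian, hence the product of the local rings `R ⧸ M ^ k`
over its maximal ideals `M`, each again with finitely many ideals. In a local ring that is not
uniserial there are `a, b` neither of which divides the other, and then the ideals `(a + u b)`
are pairwise distinct for `u` running over representatives of the residue field; so the residue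
field is finite and, the ring being Artinian, so is the ring.
-/

open Ideal IsLocalRing

section ComaximalGraph

variable {R : Type*} [CommRing R]

/-- The vertex set of the co-maximal ideal graph `Γ(R)`. -/
def comaximalVertices (R : Type*) [CommRing R] : Set (Ideal R) :=
  {I | I ≠ ⊤ ∧ ¬ I ≤ jacobson ⊥}

lemma exists_isMaximal_sup_eq_top_of_not_le_jacobson {I : Ideal R} (hI : ¬ I ≤ jacobson ⊥) :
    ∃ M : Ideal R, M.IsMaximal ∧ M ⊔ I = ⊤ := by
  obtain ⟨M, hM, hIM⟩ : ∃ M : Ideal R, M.IsMaximal ∧ ¬ I ≤ M := by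
    by_contra! h
    exact hI (le_sInf fun M hM => h M hM.2)
  refine ⟨M, hM, by_contra fun h => hIM ?_⟩
  exact le_sup_right.trans (hM.eq_of_le h le_sup_left).ge

lemma exists_isMaximal_ne_of_nonempty_comaximalVertices (h : (comaximalVertices R).Nonempty) :
    ∃ M₁ M₂ : Ideal R, M₁.IsMaximal ∧ M₂.IsMaximal ∧ M₁ ≠ M₂ := by
  obtain ⟨I, hItop, hIjac⟩ := h
  obtain ⟨M₁, hM₁, hIM₁⟩ := exists_le_maximal I hItop
  obtain ⟨M₂, hM₂, hM₂I⟩ := exists_isMaximal_sup_eq_top_of_not_le_jacobson hIjac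
  refine ⟨M₁, M₂, hM₁, hM₂, fun h => hM₁.ne_top ?_⟩
  rwa [← h, sup_eq_left.mpr hIM₁] at hM₂I

lemma Ideal.IsMaximal.mem_comaximalVertices {M M' : Ideal R} (hM : M.IsMaximal) (hM' : M'.IsMaximal)
    (hne : M ≠ M') : M ∈ comaximalVertices R :=
  ⟨hM.ne_top, fun h => hne (hM.eq_of_le hM'.ne_top (h.trans (sInf_le ⟨bot_le, hM'⟩)))⟩

lemma comaximalVertices_finite (hne : (comaximalVertices R).Nonempty)
    (hdeg : ∀ I ∈ comaximalVertices R, {J | J ∈ comaximalVertices R ∧ I ⊔ J = ⊤}.Finite) :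
    (comaximalVertices R).Finite := by
  obtain ⟨M₁, M₂, hM₁, hM₂, hne⟩ := exists_isMaximal_ne_of_nonempty_comaximalVertices hne
  have hvert {M : Ideal R} (hM : M.IsMaximal) : M ∈ comaximalVertices R := by
    obtain rfl | h := eq_or_ne M M₁
    · exact hM.mem_comaximalVertices hM₂ hne
    · exact hM.mem_comaximalVertices hM₁ h
  -- every other maximal ideal is a neighbour of `M₁`
  have hmax : {M : Ideal R | M.IsMaximal}.Finite :=
    ((hdeg M₁ (hvert hM₁)).insert M₁).subset fun M hM =>
      (eq_or_ne M M₁).imp id fun h => ⟨hvert hM, hM₁.coprime_of_ne hM h.symm⟩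
  refine (hmax.biUnion fun M hM => hdeg M (hvert hM)).subset fun I hI => ?_
  obtain ⟨M, hM, hMI⟩ := exists_isMaximal_sup_eq_top_of_not_le_jacobson hI.2
  exact Set.mem_biUnion hM ⟨hI, hMI⟩

lemma IsIdempotentElem.span_one_sub_mem_comaximalVertices {e : R} (he : IsIdempotentElem e)
    (h : span {e} ∈ comaximalVertices R) : span {1 - e} ∈ comaximalVertices R := by
  refine ⟨fun htop => h.2 ?_, fun hle => h.1 ?_⟩
  · have := (IsIdempotentElem.iff_eq_one_of_isUnit (span_singleton_eq_top.mp htop)).mp he.one_sub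
    simp [sub_eq_self.mp this]
  · have hunit : IsUnit e := isUnit_of_sub_one_mem_jacobson_bot e <| by
      simpa using neg_mem (hle (mem_span_singleton_self (1 - e)))
    rw [(IsIdempotentElem.iff_eq_one_of_isUnit hunit).mp he, span_singleton_one]

lemma exists_isIdempotentElem_span_mem_comaximalVertices (hV : (comaximalVertices R).Finite)
    {M₁ M₂ : Ideal R} (hM₁ : M₁.IsMaximal) (hM₂ : M₂.IsMaximal) (hne : M₁ ≠ M₂) :
    ∃ e : R, IsIdempotentElem e ∧ span {e} ∈ comaximalVertices R := by
  obtain ⟨g, hg₁, hg₂⟩ := SetLike.not_le_iff_exists.mp fun h => hne (hM₁.eq_of_le hM₂.ne_top h)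
  let f (k : ℕ) : Ideal R := span {g ^ (k + 1)}
  have hfV (k : ℕ) : f k ∈ comaximalVertices R := by
    refine ⟨fun htop => hM₁.ne_top (top_le_iff.mp ?_), fun hle => hg₂ ?_⟩
    · rw [← htop, span_singleton_le_iff_mem]
      exact M₁.pow_mem_of_mem hg₁ _ k.succ_pos
    · exact hM₂.isPrime.mem_of_pow_mem _ <|
        (hle.trans (sInf_le ⟨bot_le, hM₂⟩)) (mem_span_singleton_self _)
  have hf : Antitone f := antitone_nat_of_succ_le fun k =>
    span_singleton_le_span_singleton.mpr (pow_dvd_pow g k.succ.le_succ)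
  -- the decreasing chain `f` takes finitely many values, so it stabilises at some `f n`
  obtain ⟨_, hmin⟩ :=
    (hV.subset (Set.range_subset_iff.mpr hfV)).exists_minimal (Set.range_nonempty f)
  obtain ⟨n, rfl⟩ := hmin.prop
  have hidem : IsIdempotentElem (f n) := by
    have hsq : f n * f n = f (2 * n + 1) := by
      simp only [f, span_singleton_mul_span_singleton, ← pow_add]
      ring_nf
    rw [IsIdempotentElem, hsq]
    exact hmin.eq_of_le ⟨_, rfl⟩ (hf (by omega))
  obtain ⟨e, he, hfe : f n = span {e}⟩ :=
    (isIdempotentElem_iff_of_fg _ (Submodule.fg_span_singleton _)).mp hidem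
  exact ⟨e, he, hfe ▸ hfV n⟩

lemma Ideal.sup_inf_sup_eq_of_sup_eq_top_of_mul_eq_bot {A B : Ideal R} (hAB : A ⊔ B = ⊤)
    (hmul : A * B = ⊥) (I : Ideal R) : (I ⊔ A) ⊓ (I ⊔ B) = I := by
  refine le_antisymm ?_ (le_inf le_sup_left le_sup_left)
  calc (I ⊔ A) ⊓ (I ⊔ B) = ((I ⊔ A) ⊓ (I ⊔ B)) * (A ⊔ B) := by rw [hAB, Ideal.mul_top]
    _ = ((I ⊔ A) ⊓ (I ⊔ B)) * A ⊔ ((I ⊔ A) ⊓ (I ⊔ B)) * B := Ideal.mul_sup _ _ _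
    _ ≤ I := by
      refine sup_le ((mul_mono_left inf_le_right).trans ?_) ((mul_mono_left inf_le_left).trans ?_)
      · rw [Ideal.sup_mul, mul_comm B, hmul, sup_bot_eq]
        exact mul_le_left
      · rw [Ideal.sup_mul, hmul, sup_bot_eq]
        exact mul_le_left

lemma finite_ideal_of_span_mem_comaximalVertices (hV : (comaximalVertices R).Finite) {e : R}
    (he : IsIdempotentElem e) (heV : span {e} ∈ comaximalVertices R) : Finite (Ideal R) := by
  have hsup : span {e} ⊔ span {1 - e} = ⊤ := by
    rw [eq_top_iff_one]
    exact Submodule.mem_sup.mpr ⟨e, mem_span_singleton_self e, 1 - e,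
      mem_span_singleton_self _, add_sub_cancel e 1⟩
  have hmul : span {e} * span {1 - e} = ⊥ := by
    rw [span_singleton_mul_span_singleton, he.mul_one_sub_self, span_singleton_eq_bot]
  have hsupV {I J : Ideal R} (hJ : J ∈ comaximalVertices R) :
      I ⊔ J ∈ insert ⊤ (comaximalVertices R) :=
    (eq_or_ne (I ⊔ J) ⊤).imp id fun h => ⟨h, fun hle => hJ.2 (le_sup_right.trans hle)⟩
  let φ (I : Ideal R) : Ideal R × Ideal R := (I ⊔ span {e}, I ⊔ span {1 - e})
  have hφ : Function.Injective φ := fun I I' h => by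
    simpa only [φ, sup_inf_sup_eq_of_sup_eq_top_of_mul_eq_bot hsup hmul] using
      congrArg (fun p => p.1 ⊓ p.2) h
  have hrange : Set.range φ ⊆ insert ⊤ (comaximalVertices R) ×ˢ insert ⊤ (comaximalVertices R) :=
    Set.range_subset_iff.mpr fun I =>
      ⟨hsupV heV, hsupV (he.span_one_sub_mem_comaximalVertices heV)⟩
  have := (((hV.insert ⊤).prod (hV.insert ⊤)).subset hrange).to_subtype
  exact .of_injective (Set.rangeFactorization φ) (Set.rangeFactorization_injective.mpr hφ)

end ComaximalGraph

lemma IsLocalRing.dvd_or_dvd_of_span_singleton_eq {A : Type*} [CommRing A] [IsLocalRing A]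
    {a b u v : A} (huv : IsUnit (u - v)) (h : span {a + u * b} = span {a + v * b}) :
    a ∣ b ∨ b ∣ a := by
  obtain ⟨r, hr⟩ := mem_span_singleton'.mp (h ▸ mem_span_singleton_self (a + v * b))
  obtain ⟨w, hw⟩ : ∃ w, w * (u - v) = 1 := ⟨_, huv.val_inv_mul⟩
  obtain ⟨x, hx⟩ : ∃ x, x = a + u * b := ⟨_, rfl⟩
  -- `a` and `b` are multiples of `x` with cofactors `s` and `t` satisfying `s + u t = 1`
  have hb : b = w * (1 - r) * x := by linear_combination w * hr - b * hw - w * (1 - r) * hx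
  have ha : a = (1 - u * (w * (1 - r))) * x := by linear_combination (-u) * hb - hx
  rcases isUnit_or_isUnit_of_add_one (sub_add_cancel 1 (u * (w * (1 - r)))) with hs | ht
  · left
    rw [ha, hb, hs.mul_left_dvd]
    exact dvd_mul_left x _
  · right
    rw [ha, hb, (isUnit_of_mul_isUnit_right ht).mul_left_dvd]
    exact dvd_mul_left x _

section Local

variable {A : Type} [CommRing A]

lemma exists_not_dvd_and_not_dvd_of_not_isUniserialRing (h : ¬ IsUniserialRing A) :
    ∃ a b : A, ¬ a ∣ b ∧ ¬ b ∣ a := by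
  simp only [IsUniserialRing, not_forall, not_or] at h
  obtain ⟨I, J, hIJ, hJI⟩ := h
  obtain ⟨a, haI, haJ⟩ := SetLike.not_le_iff_exists.mp hIJ
  obtain ⟨b, hbJ, hbI⟩ := SetLike.not_le_iff_exists.mp hJI
  exact ⟨a, b, fun hab => hbI (I.mem_of_dvd hab haI), fun hba => haJ (J.mem_of_dvd hba hbJ)⟩

lemma IsLocalRing.finite_residueField_of_not_isUniserialRing [IsLocalRing A] [Finite (Ideal A)]
    (h : ¬ IsUniserialRing A) : Finite (ResidueField A) := by
  obtain ⟨a, b, hab, hba⟩ := exists_not_dvd_and_not_dvd_of_not_isUniserialRing h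
  let σ := Function.surjInv (residue_surjective (R := A))
  refine Finite.of_injective (fun q => span {a + σ q * b}) fun q q' hqq' => ?_
  by_contra hne
  have hσ : IsUnit (σ q - σ q') := by
    rwa [← residue_ne_zero_iff_isUnit, map_sub, Function.surjInv_eq residue_surjective,
      Function.surjInv_eq residue_surjective, sub_ne_zero]
  exact (dvd_or_dvd_of_span_singleton_eq hσ hqq').elim hab hba

lemma IsLocalRing.finite_of_not_isUniserialRing [IsLocalRing A] [Finite (Ideal A)]
    (h : ¬ IsUniserialRing A) : Finite A := by
  have := finite_residueField_of_not_isUniserialRing h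
  obtain ⟨n, hn⟩ := (isArtinianRing_iff_isNilpotent_maximalIdeal A).mp inferInstance
  have : Finite (A ⧸ (⊥ : Ideal A)) := finite_quotient_iff.mpr ⟨n, hn.le⟩
  exact .of_equiv _ (RingEquiv.quotientBot A).toEquiv

end Local

section FiniteIdeals

variable {A : Type*} [CommRing A]

lemma finite_ideal_quotient [Finite (Ideal A)] (I : Ideal A) : Finite (Ideal (A ⧸ I)) :=
  .of_injective _ (comap_injective_of_surjective _ Ideal.Quotient.mk_surjective)

lemma isLocalRing_quotient_pow_succ (M : Ideal A) [hM : M.IsMaximal] (n : ℕ) :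
    IsLocalRing (A ⧸ M ^ (n + 1)) := by
  have hcomap (P : Ideal (A ⧸ M ^ (n + 1))) (hP : P.IsMaximal) :
      P.comap (Ideal.Quotient.mk _) = M := by
    have hP' := comap_isMaximal_of_surjective _ Ideal.Quotient.mk_surjective (K := P)
    have hpow : M ^ (n + 1) ≤ P.comap (Ideal.Quotient.mk _) := fun x hx => by
      simp [Quotient.eq_zero_iff_mem.mpr hx]
    exact (hM.eq_of_le hP'.ne_top (hP'.isPrime.le_of_pow_le hpow)).symm
  have : Nontrivial (A ⧸ M ^ (n + 1)) := Quotient.nontrivial_iff.mpr fun h =>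
    hM.ne_top (top_le_iff.mp (h ▸ pow_le_self n.succ_ne_zero))
  obtain ⟨P, hP⟩ := exists_maximal (A ⧸ M ^ (n + 1))
  exact .of_unique_max_ideal ⟨P, hP, fun Q hQ => comap_injective_of_surjective _
    Ideal.Quotient.mk_surjective ((hcomap Q hQ).trans (hcomap P hP).symm)⟩

end FiniteIdeals

theorem exists_ringEquiv_pi_uniserial_prod_finite (A : Type) [CommRing A] [Finite (Ideal A)] :
    ∃ (n : ℕ) (Rs : Fin n → Type) (_ : ∀ i, CommRing (Rs i)) (S : Type) (_ : CommRing S),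
      (∀ i, IsUniserialRing (Rs i)) ∧ Finite S ∧ Nonempty (A ≃+* (∀ i, Rs i) × S) := by
  classical
  obtain ⟨n, hn⟩ := IsArtinianRing.isNilpotent_nilradical (R := A)
  have hnil : nilradical A ^ (n + 1) = ⊥ := by rw [pow_succ, hn, zero_mul]; rfl
  let Q (M : MaximalSpectrum A) : Type := A ⧸ M.asIdeal ^ (n + 1)
  have hQ (M : MaximalSpectrum A) : IsLocalRing (Q M) := isLocalRing_quotient_pow_succ _ n
  let eQ : A ≃+* ∀ M, Q M := (RingEquiv.quotientBot A).symm.trans <|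
    (quotEquivOfEq hnil.symm).trans (IsArtinianRing.quotNilradicalPowEquivPi A (n + 1)).toRingEquiv
  let eU := Finite.equivFin {M // IsUniserialRing (Q M)}
  have hS : Finite (∀ M : {M // ¬ IsUniserialRing (Q M)}, Q M) := by
    have (M : {M // ¬ IsUniserialRing (Q M)}) : Finite (Q M) :=
      have := finite_ideal_quotient (M.1.asIdeal ^ (n + 1))
      finite_of_not_isUniserialRing M.2
    exact Pi.finite
  have eSplit := RingEquiv.piEquivPiSubtypeProd (fun M => IsUniserialRing (Q M)) Q
  have eIndex := (RingEquiv.piCongrLeft (fun M => Q M.1) eU.symm).symm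
  exact ⟨_, fun j => Q (eU.symm j), fun _ => inferInstance, _, inferInstance,
    fun j => (eU.symm j).2, hS, ⟨(eQ.trans eSplit).trans (eIndex.prodCongr (.refl _))⟩⟩

/-- If the co-maximal ideal graph `Γ(R)` has at least one vertex and every vertex has
finite degree, then `R` is isomorphic to a direct product of finitely many uniserial
commutative rings and a finite commutative ring. -/
theorem prod_uniserial_of_all_degrees_finite
    (R : Type) [CommRing R]
    (hne : ∃ I : Ideal R, I ≠ ⊤ ∧ ¬ I ≤ Ideal.jacobson (⊥ : Ideal R))
    (hdeg : ∀ I : Ideal R, I ≠ ⊤ → ¬ I ≤ Ideal.jacobson (⊥ : Ideal R) →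
      {J : Ideal R | J ≠ ⊤ ∧ ¬ J ≤ Ideal.jacobson (⊥ : Ideal R) ∧ I ⊔ J = ⊤}.Finite) :
    ∃ (n : ℕ) (Rs : Fin n → Type) (_ : ∀ i, CommRing (Rs i))
      (S : Type) (_ : CommRing S),
      (∀ i, IsUniserialRing (Rs i)) ∧ Finite S ∧
        Nonempty (R ≃+* (∀ i, Rs i) × S) := by
  have hV : (comaximalVertices R).Finite :=
    comaximalVertices_finite hne fun I hI =>
      (hdeg I hI.1 hI.2).subset fun _ hJ => ⟨hJ.1.1, hJ.1.2, hJ.2⟩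
  obtain ⟨M₁, M₂, hM₁, hM₂, hM⟩ := exists_isMaximal_ne_of_nonempty_comaximalVertices hne
  obtain ⟨e, he, heV⟩ := exists_isIdempotentElem_span_mem_comaximalVertices hV hM₁ hM₂ hM
  have := finite_ideal_of_span_mem_comaximalVertices hV he heV
  exact exists_ringEquiv_pi_uniserial_prod_finite R
end

section
/- Let R₁, R₂, R₃ be nontrivial commutative rings with unity, let R = R₁ × R₂ × R₃, and let I and J be two distinct ideals of R₁ with 0 ≠ I ≠ R₁ and 0 ≠ J ≠ R₁. Then the six ideals I × R₂ × R₃, J × R₂ × R₃, 0 × R₂ × R₃, R₁ × 0 × R₃, R₁ × R₂ × 0, R₁ × 0 × 0 of R are pairwise distinct proper ideals not contained in J(R), and every ideal in the first three is comaximal with every ideal in the last three (their sum is R). In particular, Γ(R) contains K₃,₃ as a subgraph. -/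
/-!
The ideals `I × R₂ × R₃`, `J × R₂ × R₃`, `0 × R₂ × R₃` all contain the idempotent
`e = (0, 1, 1)`, and `R₁ × 0 × R₃`, `R₁ × R₂ × 0`, `R₁ × 0 × 0` all contain `1 - e = (1, 0, 0)`;
so each ideal of the first kind is comaximal with each of the second. A nonzero idempotent never
lies in the Jacobson radical, since `1 - e` would then be a unit annihilating `e`. Distinctness
and properness are read off componentwise.
-/

/-- The ideal `A × B × C` of the ring `R₁ × R₂ × R₃`. -/
def idealProd3 {R₁ R₂ R₃ : Type} [CommRing R₁] [CommRing R₂] [CommRing R₃]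
    (A : Ideal R₁) (B : Ideal R₂) (C : Ideal R₃) : Ideal (R₁ × R₂ × R₃) :=
  A.prod (B.prod C)

theorem IsIdempotentElem.eq_zero_of_mem_jacobson_bot {R : Type*} [CommRing R] {e : R}
    (he : IsIdempotentElem e) (hj : e ∈ (⊥ : Ideal R).jacobson) : e = 0 := by
  have hunit : IsUnit (1 - e) := by
    simpa [sub_eq_add_neg, add_comm] using Ideal.mem_jacobson_bot.1 hj (-1)
  have hann : (1 - e) * e = 0 := by rw [sub_mul, one_mul, he.eq, sub_self]
  exact hunit.mul_right_eq_zero.1 hann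

theorem Ideal.not_le_jacobson_bot_of_isIdempotentElem_mem {R : Type*} [CommRing R] {L : Ideal R}
    {e : R} (he : IsIdempotentElem e) (he0 : e ≠ 0) (heL : e ∈ L) :
    ¬ L ≤ (⊥ : Ideal R).jacobson :=
  fun hL => he0 (he.eq_zero_of_mem_jacobson_bot (hL heL))

theorem Ideal.sup_eq_top_of_mem_of_one_sub_mem {R : Type*} [CommRing R] {A B : Ideal R} {e : R}
    (hA : e ∈ A) (hB : 1 - e ∈ B) : A ⊔ B = ⊤ :=
  (Ideal.eq_top_iff_one _).2 (by simpa using Submodule.add_mem_sup hA hB)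

/-- If `R = R₁ × R₂ × R₃` with the `Rᵢ` nontrivial commutative rings and `I, J` are two
distinct nontrivial proper ideals of `R₁`, then the six ideals `I×R₂×R₃, J×R₂×R₃,
0×R₂×R₃, R₁×0×R₃, R₁×R₂×0, R₁×0×0` are pairwise distinct proper ideals of `R` not
contained in `J(R)`, and each of the first three is comaximal with each of the last
three; in particular `Γ(R)` contains `K₃,₃`. -/
theorem triple_product_K33
    (R₁ R₂ R₃ : Type) [CommRing R₁] [CommRing R₂] [CommRing R₃]
    [Nontrivial R₁] [Nontrivial R₂] [Nontrivial R₃]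
    (I J : Ideal R₁) (hIJ : I ≠ J)
    (hI0 : I ≠ ⊥) (hItop : I ≠ ⊤) (hJ0 : J ≠ ⊥) (hJtop : J ≠ ⊤) :
    ([idealProd3 I ⊤ ⊤, idealProd3 J ⊤ ⊤, idealProd3 ⊥ ⊤ ⊤,
      idealProd3 ⊤ ⊥ ⊤, idealProd3 ⊤ ⊤ ⊥, idealProd3 ⊤ ⊥ ⊥] :
      List (Ideal (R₁ × R₂ × R₃))).Pairwise (· ≠ ·) ∧
    (∀ L ∈ ([idealProd3 I ⊤ ⊤, idealProd3 J ⊤ ⊤, idealProd3 ⊥ ⊤ ⊤,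
      idealProd3 ⊤ ⊥ ⊤, idealProd3 ⊤ ⊤ ⊥, idealProd3 ⊤ ⊥ ⊥] :
      List (Ideal (R₁ × R₂ × R₃))),
      L ≠ ⊤ ∧ ¬ L ≤ Ideal.jacobson (⊥ : Ideal (R₁ × R₂ × R₃))) ∧
    (∀ A ∈ ([idealProd3 I ⊤ ⊤, idealProd3 J ⊤ ⊤, idealProd3 ⊥ ⊤ ⊤] :
      List (Ideal (R₁ × R₂ × R₃))),
      ∀ B ∈ ([idealProd3 ⊤ ⊥ ⊤, idealProd3 ⊤ ⊤ ⊥, idealProd3 ⊤ ⊥ ⊥] :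
      List (Ideal (R₁ × R₂ × R₃))), A ⊔ B = ⊤) := by
  set e : R₁ × R₂ × R₃ := (0, 1, 1)
  have he : IsIdempotentElem e := by simp [e, IsIdempotentElem]
  have he0 : e ≠ 0 := by simp [e]
  have hcompl : 1 - e = (1, 0, 0) := by ext <;> simp [e]
  refine ⟨by simp [idealProd3, hIJ, hI0, hItop, hJ0, hJtop], fun L hL => ?_, fun A hA B hB => ?_⟩
  · simp only [List.mem_cons, List.not_mem_nil, or_false] at hL
    have hproper : L ≠ ⊤ := by
      rcases hL with rfl | rfl | rfl | rfl | rfl | rfl <;> simp [idealProd3, hItop, hJtop]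
    have hmem : e ∈ L ∨ 1 - e ∈ L := by
      rcases hL with rfl | rfl | rfl | rfl | rfl | rfl <;>
        simp [e, hcompl, idealProd3, Ideal.mem_prod]
    refine ⟨hproper, ?_⟩
    rcases hmem with he_mem | he_mem
    · exact Ideal.not_le_jacobson_bot_of_isIdempotentElem_mem he he0 he_mem
    · exact Ideal.not_le_jacobson_bot_of_isIdempotentElem_mem he.one_sub (by simp [hcompl]) he_mem
  · simp only [List.mem_cons, List.not_mem_nil, or_false] at hA hB
    refine Ideal.sup_eq_top_of_mem_of_one_sub_mem (e := e) ?_ ?_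
    · rcases hA with rfl | rfl | rfl <;> simp [e, idealProd3, Ideal.mem_prod]
    · rcases hB with rfl | rfl | rfl <;> simp [hcompl, idealProd3, Ideal.mem_prod]
end
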